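/- Let Φ ∈ C_c(ℝ²) be a probability density supported in the ball of radius 1, and suppose Ψ : ℝ² × [0,T₀] → ℝ satisfies sup_{0 ≤ t ≤ T₀} |Ψ(y,t)| ≤ C₀/(1 + |y|^p) for some p ∈ (0,∞) and constant C₀. Then there is a constant C (depending on C₀, T₀, p, Φ) such that for all T ∈ (0,T₀], η ∈ (0,1/2) and x₀ ∈ ℝ²: |(2π / log η^{−1}) ∫₀^T ∫_{ℝ²} [P_t Φ_η(y)]² Ψ(x₀ − y, t) dy dt| ≤ C / (1 + |x₀|^p). -/

import Mathlib

open MeasureTheory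

/-- The two-dimensional heat kernel `P_t(x) = (2πt)⁻¹ exp(−‖x‖²/(2t))`. -/
noncomputable def heatK (t : ℝ) (x : EuclideanSpace ℝ (Fin 2)) : ℝ :=
  (2 * Real.pi * t)⁻¹ * Real.exp (-‖x‖ ^ 2 / (2 * t))

/-!
Write `f = P_t Φ_η`. As `Φ_η` is a probability density, `0 ≤ f ≤ min ((2πt)⁻¹, η⁻² sup Φ)` and
`∫ f = 1`; as `Φ_η` lives in the unit ball, `f` has a Gaussian tail beyond radius `2`, so
`∫ f(y) (1 + |y|^p) dy` is bounded uniformly in `t ≤ T₀` and `η`. Peetre's inequality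
`1 + |x₀|^p ≤ 2^p (1 + |x₀ - y|^p) (1 + |y|^p)` transfers the decay of `Ψ` to `x₀`, and
`f² ≤ f · sup f` bounds the space integral by `C min ((2πt)⁻¹, η⁻² sup Φ) / (1 + |x₀|^p)`.
Its time integral over `(0, T)` is at most `sup Φ + (2π)⁻¹ log⁺ (T / η²)`, which is
`O(log η⁻¹)` and cancels the prefactor.
-/

open Real Set
open scoped Convolution

local notation "ℝ²" => EuclideanSpace ℝ (Fin 2)

lemma heatK_nonneg {t : ℝ} (ht : 0 ≤ t) (x : ℝ²) : 0 ≤ heatK t x := by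
  unfold heatK; positivity

lemma heatK_le {t : ℝ} (ht : 0 ≤ t) (x : ℝ²) : heatK t x ≤ (2 * π * t)⁻¹ := by
  unfold heatK
  refine mul_le_of_le_one_right (by positivity) (exp_le_one_iff.2 ?_)
  exact div_nonpos_of_nonpos_of_nonneg (by simp) (by positivity)

lemma heatK_anti {t : ℝ} (ht : 0 ≤ t) {x x' : ℝ²} (h : ‖x‖ ≤ ‖x'‖) : heatK t x' ≤ heatK t x := by
  unfold heatK
  gcongr

lemma heatK_half_smul (t : ℝ) (y : ℝ²) :
    heatK t ((1 / 2 : ℝ) • y) = 8 * heatK (8 * t) y * exp (-‖y‖ ^ 2 / (16 * t)) := by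
  simp only [heatK, norm_smul, Real.norm_eq_abs, abs_of_pos (by norm_num : (0 : ℝ) < 1 / 2)]
  rw [show -(1 / 2 * ‖y‖) ^ 2 / (2 * t) = -‖y‖ ^ 2 / (2 * (8 * t)) + -‖y‖ ^ 2 / (16 * t) by ring,
    exp_add]
  ring

lemma integral_heatK {t : ℝ} (ht : 0 < t) : ∫ x, heatK t x = 1 := by
  have hgauss := GaussianFourier.integral_rexp_neg_mul_sq_norm (V := ℝ²)
    (inv_pos.2 (mul_pos two_pos ht))
  have hK : ∫ x, heatK t x = (2 * π * t)⁻¹ * ∫ v : ℝ², exp (-(2 * t)⁻¹ * ‖v‖ ^ 2) := by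
    rw [← integral_const_mul]
    congr with x
    rw [heatK]
    ring_nf
  rw [hK, hgauss, finrank_euclideanSpace_fin]
  norm_num
  field_simp

lemma integrable_heatK {t : ℝ} (ht : 0 < t) : Integrable (heatK t) :=
  .of_integral_ne_zero (by rw [integral_heatK ht]; exact one_ne_zero)

noncomputable section

-- `heatSmooth t g = P_t g` and `dilate η Φ = Φ_η`.
def heatSmooth (t : ℝ) (g : ℝ² → ℝ) (y : ℝ²) : ℝ := ∫ z, heatK t (y - z) * g z

def dilate (η : ℝ) (Φ : ℝ² → ℝ) (z : ℝ²) : ℝ := (η ^ 2)⁻¹ * Φ (η⁻¹ • z)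

end

structure IsUnitBallDensity (g : ℝ² → ℝ) : Prop where
  integrable : Integrable g
  nonneg : ∀ z, 0 ≤ g z
  eq_zero_of_one_lt_norm : ∀ z, 1 < ‖z‖ → g z = 0
  integral_eq_one : ∫ z, g z = 1

section Dilate

variable {Φ : ℝ² → ℝ} {η : ℝ}

lemma dilate_eq_zero_of_lt_norm (hΦ : ∀ z, 1 < ‖z‖ → Φ z = 0) (hη : 0 < η) {z : ℝ²}
    (hz : η < ‖z‖) : dilate η Φ z = 0 := by
  rw [dilate, hΦ, mul_zero]
  rwa [norm_smul, norm_inv, Real.norm_eq_abs, abs_of_pos hη, inv_mul_eq_div, one_lt_div hη]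

lemma integral_dilate (hη : 0 < η) : ∫ z, dilate η Φ z = ∫ z, Φ z := by
  simp only [dilate]
  rw [integral_const_mul, Measure.integral_comp_inv_smul_of_nonneg volume Φ hη.le,
    finrank_euclideanSpace_fin, smul_eq_mul, ← mul_assoc]
  field_simp

lemma dilate_le {M : ℝ} (hM : ∀ z, Φ z ≤ M) (η : ℝ) (z : ℝ²) :
    dilate η Φ z ≤ (η ^ 2)⁻¹ * M :=
  mul_le_mul_of_nonneg_left (hM _) (by positivity)

lemma isUnitBallDensity_dilate (hΦc : Continuous Φ) (hΦ0 : ∀ z, 0 ≤ Φ z)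
    (hΦsupp : ∀ z, 1 < ‖z‖ → Φ z = 0) (hΦ1 : ∫ z, Φ z = 1) (hη : 0 < η) (hη1 : η ≤ 1) :
    IsUnitBallDensity (dilate η Φ) where
  integrable := by
    refine Continuous.integrable_of_hasCompactSupport (by unfold dilate; fun_prop)
      (HasCompactSupport.intro (isCompact_closedBall 0 η) fun z hz => ?_)
    exact dilate_eq_zero_of_lt_norm hΦsupp hη (by simpa using hz)
  nonneg z := mul_nonneg (by positivity) (hΦ0 _)
  eq_zero_of_one_lt_norm z hz := dilate_eq_zero_of_lt_norm hΦsupp hη (hη1.trans_lt hz)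
  integral_eq_one := (integral_dilate hη).trans hΦ1

end Dilate

section HeatSmooth

variable {t : ℝ} {g : ℝ² → ℝ}

lemma heatSmooth_eq_convolution : heatSmooth t g = g ⋆[ContinuousLinearMap.mul ℝ ℝ] heatK t := by
  ext y
  simp only [heatSmooth, convolution_def, ContinuousLinearMap.mul_apply', mul_comm]

lemma integrable_heatSmooth (ht : 0 < t) (hg : Integrable g) : Integrable (heatSmooth t g) := by
  rw [heatSmooth_eq_convolution]
  exact hg.integrable_convolution _ (integrable_heatK ht)

lemma integral_heatSmooth (ht : 0 < t) (hg : Integrable g) :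
    ∫ y, heatSmooth t g y = ∫ z, g z := by
  rw [heatSmooth_eq_convolution, integral_convolution _ hg (integrable_heatK ht),
    integral_heatK ht]
  simp

lemma heatSmooth_nonneg (ht : 0 ≤ t) (hg : ∀ z, 0 ≤ g z) (y : ℝ²) : 0 ≤ heatSmooth t g y :=
  integral_nonneg fun z => mul_nonneg (heatK_nonneg ht _) (hg z)

lemma heatSmooth_le_of_le (ht : 0 < t) (hg : ∀ z, 0 ≤ g z) {A : ℝ} (hgA : ∀ z, g z ≤ A)
    (y : ℝ²) : heatSmooth t g y ≤ A := by
  calc heatSmooth t g y ≤ ∫ z, heatK t (y - z) * A :=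
        integral_mono_of_nonneg (.of_forall fun z => mul_nonneg (heatK_nonneg ht.le _) (hg z))
          (((integrable_heatK ht).comp_sub_left y).mul_const _)
          (.of_forall fun z => mul_le_mul_of_nonneg_left (hgA z) (heatK_nonneg ht.le _))
    _ = A := by rw [integral_mul_const, integral_sub_left_eq_self, integral_heatK ht, one_mul]

variable (hg : IsUnitBallDensity g)
include hg

lemma IsUnitBallDensity.heatSmooth_le_of_forall {y : ℝ²} {c : ℝ}
    (h : ∀ z, ‖z‖ ≤ 1 → heatK t (y - z) ≤ c) (ht : 0 ≤ t) : heatSmooth t g y ≤ c := by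
  have hpt : ∀ z, heatK t (y - z) * g z ≤ c * g z := by
    intro z
    rcases le_or_gt ‖z‖ 1 with hz | hz
    · exact mul_le_mul_of_nonneg_right (h z hz) (hg.nonneg z)
    · simp [hg.eq_zero_of_one_lt_norm z hz]
  calc heatSmooth t g y ≤ ∫ z, c * g z :=
        integral_mono_of_nonneg (.of_forall fun z => mul_nonneg (heatK_nonneg ht _) (hg.nonneg z))
          (hg.integrable.const_mul c) (.of_forall hpt)
    _ = c := by rw [integral_const_mul, hg.integral_eq_one, mul_one]

lemma IsUnitBallDensity.heatSmooth_le_inv (ht : 0 ≤ t) (y : ℝ²) :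
    heatSmooth t g y ≤ (2 * π * t)⁻¹ :=
  hg.heatSmooth_le_of_forall (fun _ _ => heatK_le ht _) ht

lemma IsUnitBallDensity.heatSmooth_le_heatK_half (ht : 0 ≤ t) {y : ℝ²} (hy : 2 ≤ ‖y‖) :
    heatSmooth t g y ≤ heatK t ((1 / 2 : ℝ) • y) := by
  refine hg.heatSmooth_le_of_forall (fun z hz => heatK_anti ht ?_) ht
  rw [norm_smul, Real.norm_eq_abs, abs_of_pos (by norm_num : (0 : ℝ) < 1 / 2)]
  linarith [norm_sub_norm_le y z]

end HeatSmooth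

lemma one_add_norm_rpow_le {E : Type*} [SeminormedAddCommGroup E] {p : ℝ} (hp : 0 ≤ p)
    (x y : E) : 1 + ‖x‖ ^ p ≤ 2 ^ p * (1 + ‖x - y‖ ^ p) * (1 + ‖y‖ ^ p) := by
  have h2p : 1 ≤ (2 : ℝ) ^ p := one_le_rpow one_le_two hp
  have ha := rpow_nonneg (norm_nonneg (x - y)) p
  have hb := rpow_nonneg (norm_nonneg y) p
  have htri : ‖x‖ ≤ ‖x - y‖ + ‖y‖ := by linarith [norm_sub_norm_le x y]
  have hdouble {a b : ℝ} (ha : 0 ≤ a) (hab : a ≤ b) (h : ‖x‖ ≤ a + b) :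
      ‖x‖ ^ p ≤ 2 ^ p * b ^ p := by
    rw [← mul_rpow zero_le_two (ha.trans hab)]
    gcongr
    linarith
  have hsum : ‖x‖ ^ p ≤ 2 ^ p * (‖x - y‖ ^ p + ‖y‖ ^ p) := by
    rcases le_total ‖x - y‖ ‖y‖ with h | h
    · nlinarith [hdouble (norm_nonneg _) h htri]
    · nlinarith [hdouble (norm_nonneg _) h (htri.trans_eq (add_comm _ _))]
  nlinarith [mul_nonneg ha hb]

lemma one_add_rpow_mul_exp_le {p t T₀ r : ℝ} (hp : 0 < p) (ht : 0 < t) (htT : t ≤ T₀)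
    (hr : 0 ≤ r) : (1 + r ^ p) * exp (-r ^ 2 / (16 * t)) ≤ 1 + exp (4 * T₀ * p ^ 2) := by
  have hT₀ : 0 < T₀ := ht.trans_le htT
  have hexp_mono : exp (-r ^ 2 / (16 * t)) ≤ exp (-r ^ 2 / (16 * T₀)) := by
    rw [neg_div, neg_div]; gcongr
  have hexp_le_one : exp (-r ^ 2 / (16 * T₀)) ≤ 1 :=
    exp_le_one_iff.2 (div_nonpos_of_nonpos_of_nonneg (by nlinarith) (by positivity))
  have hrpow : r ^ p ≤ exp (p * r) := by
    rw [mul_comm, exp_mul]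
    gcongr
    linarith [add_one_le_exp r]
  -- `p r - r² / (16 T₀)` is maximal at `r = 8 T₀ p`
  have hquad : p * r - 4 * T₀ * p ^ 2 ≤ r ^ 2 / (16 * T₀) := by
    rw [le_div_iff₀ (by positivity)]
    nlinarith [sq_nonneg (r - 8 * T₀ * p)]
  calc (1 + r ^ p) * exp (-r ^ 2 / (16 * t))
      ≤ exp (-r ^ 2 / (16 * T₀)) + exp (p * r) * exp (-r ^ 2 / (16 * T₀)) := by
        rw [← one_add_mul]; gcongr
    _ ≤ 1 + exp (4 * T₀ * p ^ 2) := by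
        rw [← exp_add]
        gcongr
        linarith [neg_div (16 * T₀) (r ^ 2)]

section SpatialBound

variable {p t T₀ : ℝ} {g : ℝ² → ℝ}

/-- Beyond radius `2`, half of the Gaussian decay of `P_t g` absorbs the weight and the other
half is again a heat kernel. -/
lemma IsUnitBallDensity.heatSmooth_mul_one_add_rpow_le (hg : IsUnitBallDensity g) (hp : 0 < p)
    (ht : 0 < t) (htT : t ≤ T₀) (y : ℝ²) :
    heatSmooth t g y * (1 + ‖y‖ ^ p) ≤
      (1 + 2 ^ p) * heatSmooth t g y + 8 * (1 + exp (4 * T₀ * p ^ 2)) * heatK (8 * t) y := by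
  have hf0 := heatSmooth_nonneg ht.le hg.nonneg y
  have hK0 := heatK_nonneg (by positivity : 0 ≤ 8 * t) y
  rcases le_or_gt ‖y‖ 2 with hy | hy
  · have : ‖y‖ ^ p ≤ 2 ^ p := rpow_le_rpow (norm_nonneg y) hy hp.le
    nlinarith [rpow_nonneg (norm_nonneg y) p, exp_pos (4 * T₀ * p ^ 2)]
  · calc heatSmooth t g y * (1 + ‖y‖ ^ p)
        ≤ heatK t ((1 / 2 : ℝ) • y) * (1 + ‖y‖ ^ p) := by
          gcongr
          exact hg.heatSmooth_le_heatK_half ht.le hy.le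
      _ = 8 * heatK (8 * t) y * ((1 + ‖y‖ ^ p) * exp (-‖y‖ ^ 2 / (16 * t))) := by
          rw [heatK_half_smul]; ring
      _ ≤ 8 * heatK (8 * t) y * (1 + exp (4 * T₀ * p ^ 2)) := by
          gcongr
          exact one_add_rpow_mul_exp_le hp ht htT (norm_nonneg y)
      _ ≤ _ := by nlinarith [mul_nonneg (by positivity : (0 : ℝ) ≤ 1 + 2 ^ p) hf0]

lemma IsUnitBallDensity.abs_integral_heatSmooth_sq_mul_le (hg : IsUnitBallDensity g)
    (hp : 0 < p) (ht : 0 < t) (htT : t ≤ T₀) {A : ℝ} (hgA : ∀ z, g z ≤ A) {B : ℝ}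
    {ψ : ℝ² → ℝ} (hψ : ∀ y, |ψ y| ≤ B / (1 + ‖y‖ ^ p)) (x₀ : ℝ²) :
    |∫ y, heatSmooth t g y ^ 2 * ψ (x₀ - y)| ≤
      B * 2 ^ p * (1 + 2 ^ p + 8 * (1 + exp (4 * T₀ * p ^ 2))) / (1 + ‖x₀‖ ^ p) *
        min (2 * π * t)⁻¹ A := by
  set f := heatSmooth t g
  set m := min (2 * π * t)⁻¹ A
  set K := 1 + exp (4 * T₀ * p ^ 2)
  have hpos (x : ℝ²) : 0 < 1 + ‖x‖ ^ p := by positivity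
  have hB : 0 ≤ B := (div_nonneg_iff.1 ((abs_nonneg _).trans (hψ 0))).elim And.left
    fun h => absurd h.2 (hpos 0).not_ge
  have hm : 0 ≤ m := le_min (by positivity) ((hg.nonneg 0).trans (hgA 0))
  have hf0 : ∀ y, 0 ≤ f y := heatSmooth_nonneg ht.le hg.nonneg
  have hfm : ∀ y, f y ≤ m := fun y =>
    le_min (hg.heatSmooth_le_inv ht.le y) (heatSmooth_le_of_le ht hg.nonneg hgA y)
  have hψ_shift (y : ℝ²) : |ψ (x₀ - y)| ≤ B * 2 ^ p * (1 + ‖y‖ ^ p) / (1 + ‖x₀‖ ^ p) := by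
    refine (hψ _).trans ?_
    rw [div_le_div_iff₀ (hpos _) (hpos _)]
    nlinarith [one_add_norm_rpow_le hp.le x₀ y]
  set D := B * 2 ^ p * m / (1 + ‖x₀‖ ^ p)
  have hD : 0 ≤ D := div_nonneg (mul_nonneg (mul_nonneg hB (by positivity)) hm) (hpos _).le
  have hpt (y : ℝ²) : ‖f y ^ 2 * ψ (x₀ - y)‖ ≤ D * ((1 + 2 ^ p) * f y + 8 * K * heatK (8 * t) y) :=
    calc ‖f y ^ 2 * ψ (x₀ - y)‖ = f y * f y * |ψ (x₀ - y)| := by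
          rw [Real.norm_eq_abs, abs_mul, abs_of_nonneg (sq_nonneg _), sq]
      _ ≤ m * f y * (B * 2 ^ p * (1 + ‖y‖ ^ p) / (1 + ‖x₀‖ ^ p)) := by
          exact mul_le_mul (mul_le_mul_of_nonneg_right (hfm y) (hf0 y)) (hψ_shift y)
            (abs_nonneg _) (mul_nonneg hm (hf0 y))
      _ = D * (f y * (1 + ‖y‖ ^ p)) := by ring
      _ ≤ D * ((1 + 2 ^ p) * f y + 8 * K * heatK (8 * t) y) :=
          mul_le_mul_of_nonneg_left (hg.heatSmooth_mul_one_add_rpow_le hp ht htT y) hD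
  have hint_f := integrable_heatSmooth ht hg.integrable
  have hint_K := integrable_heatK (by positivity : 0 < 8 * t)
  calc |∫ y, f y ^ 2 * ψ (x₀ - y)|
      ≤ ∫ y, D * ((1 + 2 ^ p) * f y + 8 * K * heatK (8 * t) y) :=
        norm_integral_le_of_norm_le (((hint_f.const_mul _).add (hint_K.const_mul _)).const_mul _)
          (.of_forall hpt)
    _ = D * (1 + 2 ^ p + 8 * K) := by
        rw [integral_const_mul, integral_add (hint_f.const_mul _) (hint_K.const_mul _),
          integral_const_mul, integral_const_mul, integral_heatSmooth ht hg.integrable,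
          hg.integral_eq_one, integral_heatK (by positivity)]
        ring
    _ = _ := by ring

end SpatialBound

section TimeIntegral

variable {c a : ℝ}

lemma integrableOn_min_inv (hc : 0 ≤ c) (ha : 0 ≤ a) (T : ℝ) :
    IntegrableOn (fun t => min (c * t)⁻¹ a) (Ioc 0 T) := by
  refine .of_bound measure_Ioc_lt_top (by fun_prop) a
    ((ae_restrict_iff' measurableSet_Ioc).2 (.of_forall fun t ht => ?_))
  have : 0 ≤ (c * t)⁻¹ := inv_nonneg.2 (mul_nonneg hc ht.1.le)
  rw [Real.norm_of_nonneg (le_min this ha)]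
  exact min_le_right _ _

lemma setIntegral_min_inv_le (hc : 0 < c) (ha : 0 ≤ a) {s T : ℝ} (hs : 0 < s) (hT : 0 < T) :
    ∫ t in Ioo 0 T, min (c * t)⁻¹ a ≤ a * s + c⁻¹ * max (log (T / s)) 0 := by
  have hint (u v : ℝ) (hu : 0 ≤ u) (huv : u ≤ v) :
      IntervalIntegrable (fun t => min (c * t)⁻¹ a) volume u v :=
    (intervalIntegrable_iff_integrableOn_Ioc_of_le huv).2
      ((integrableOn_min_inv hc.le ha v).mono_set (Ioc_subset_Ioc_left hu))
  have hle_a (u : ℝ) (hu : 0 ≤ u) : ∫ t in (0)..u, min (c * t)⁻¹ a ≤ a * u := by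
    calc ∫ t in (0)..u, min (c * t)⁻¹ a ≤ ∫ _ in (0)..u, a :=
          intervalIntegral.integral_mono_on hu (hint 0 u le_rfl hu) intervalIntegrable_const
            fun _ _ => min_le_right _ _
      _ = a * u := by simp [mul_comm]
  have hc' : 0 ≤ c⁻¹ * max (log (T / s)) 0 := by positivity
  rw [integral_Ioc_eq_integral_Ioo.symm, ← intervalIntegral.integral_of_le hT.le]
  rcases le_or_gt T s with hTs | hsT
  · nlinarith [hle_a T hT.le]
  · rw [← intervalIntegral.integral_add_adjacent_intervals (hint 0 s le_rfl hs.le)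
      (hint s T hs.le hsT.le)]
    have htail : ∫ t in s..T, min (c * t)⁻¹ a ≤ c⁻¹ * log (T / s) := calc
      ∫ t in s..T, min (c * t)⁻¹ a ≤ ∫ t in s..T, c⁻¹ * t⁻¹ :=
        intervalIntegral.integral_mono_on hsT.le (hint s T hs.le hsT.le)
          ((intervalIntegrable_inv_iff.2 (.inr (notMem_uIcc_of_lt hs (hs.trans hsT)))).const_mul _)
          fun t _ => (min_le_left _ _).trans_eq (mul_inv c t)
      _ = c⁻¹ * log (T / s) := by
        rw [intervalIntegral.integral_const_mul, integral_inv_of_pos hs (hs.trans hsT)]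
    nlinarith [hle_a s hs.le, le_max_left (log (T / s)) 0, inv_pos.2 hc]

end TimeIntegral

lemma abs_log_mul_setIntegral_le {F : ℝ → ℝ} {D M T T₀ η : ℝ} (hD : 0 ≤ D) (hM : 0 ≤ M)
    (hT : T ∈ Ioc 0 T₀) (hη : η ∈ Ioo 0 (1 / 2))
    (hF : ∀ t ∈ Ioo 0 T, |F t| ≤ D * min (2 * π * t)⁻¹ ((η ^ 2)⁻¹ * M)) :
    |2 * π / log η⁻¹ * ∫ t in Ioo 0 T, F t| ≤
      D * ((2 * π * M + max (log T₀) 0) / log 2 + 2) := by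
  obtain ⟨hη0, hη2⟩ := hη
  have hL : log 2 ≤ log η⁻¹ := log_le_log two_pos (by rw [le_inv_comm₀ two_pos hη0]; linarith)
  have hL0 : 0 < log η⁻¹ := (log_pos one_lt_two).trans_le hL
  have hintegral : |∫ t in Ioo 0 T, F t| ≤ D * (M + (2 * π)⁻¹ * (max (log T₀) 0 + 2 * log η⁻¹)) :=
    calc |∫ t in Ioo 0 T, F t| ≤ ∫ t in Ioo 0 T, D * min (2 * π * t)⁻¹ ((η ^ 2)⁻¹ * M) :=
          norm_integral_le_of_norm_le (f := F)
            (((integrableOn_min_inv (c := 2 * π) (a := (η ^ 2)⁻¹ * M) (by positivity)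
              (by positivity) T).mono_set Ioo_subset_Ioc_self).const_mul D)
            ((ae_restrict_iff' measurableSet_Ioo).2 (.of_forall fun t ht => (hF t ht :)))
      _ ≤ D * ((η ^ 2)⁻¹ * M * η ^ 2 + (2 * π)⁻¹ * max (log (T / η ^ 2)) 0) := by
          rw [integral_const_mul]
          gcongr
          exact setIntegral_min_inv_le (by positivity) (by positivity) (by positivity) hT.1
      _ ≤ D * (M + (2 * π)⁻¹ * (max (log T₀) 0 + 2 * log η⁻¹)) := by
          rw [mul_right_comm, inv_mul_cancel₀ (by positivity), one_mul]
          gcongr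
          refine max_le ?_ (by positivity)
          rw [log_div hT.1.ne' (by positivity), log_pow, log_inv]
          push_cast
          linarith [log_le_log hT.1 hT.2, le_max_left (log T₀) 0]
  calc |2 * π / log η⁻¹ * ∫ t in Ioo 0 T, F t|
      ≤ 2 * π / log η⁻¹ * (D * (M + (2 * π)⁻¹ * (max (log T₀) 0 + 2 * log η⁻¹))) := by
        rw [abs_mul, abs_of_pos (by positivity)]
        gcongr
    _ = D * ((2 * π * M + max (log T₀) 0) / log η⁻¹ + 2) := by
        generalize log η⁻¹ = L at hL0 ⊢
        field_simp
        ring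
    _ ≤ D * ((2 * π * M + max (log T₀) 0) / log 2 + 2) := by
        gcongr

theorem stmt_14_general (Φ : EuclideanSpace ℝ (Fin 2) → ℝ) (hΦc : Continuous Φ)
    (hΦ0 : ∀ z, 0 ≤ Φ z) (hΦsupp : ∀ z : EuclideanSpace ℝ (Fin 2), 1 < ‖z‖ → Φ z = 0)
    (hΦ1 : (∫ z, Φ z) = 1)
    (p C₀ T₀ : ℝ) (hp : 0 < p) :
    ∃ C : ℝ, 0 < C ∧ ∀ Ψ : EuclideanSpace ℝ (Fin 2) × ℝ → ℝ,
      (∀ y : EuclideanSpace ℝ (Fin 2), ∀ t ∈ Set.Icc (0:ℝ) T₀,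
        |Ψ (y, t)| ≤ C₀ / (1 + ‖y‖ ^ p)) →
      ∀ T ∈ Set.Ioc (0:ℝ) T₀, ∀ η ∈ Set.Ioo (0:ℝ) (1/2), ∀ x₀ : EuclideanSpace ℝ (Fin 2),
        |(2 * Real.pi / Real.log η⁻¹) *
            ∫ t in Set.Ioo (0:ℝ) T, ∫ y : EuclideanSpace ℝ (Fin 2),
              (∫ z, heatK t (y - z) * ((η ^ 2)⁻¹ * Φ (η⁻¹ • z))) ^ 2 * Ψ (x₀ - y, t)|
          ≤ C / (1 + ‖x₀‖ ^ p) := by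
  obtain ⟨z₀, hz₀⟩ := hΦc.exists_forall_ge_of_hasCompactSupport
    (.intro (isCompact_closedBall 0 1) fun z hz => hΦsupp z (by simpa using hz))
  have hΦz₀ := hΦ0 z₀
  set B := max C₀ 1
  set K := B * 2 ^ p * (1 + 2 ^ p + 8 * (1 + exp (4 * T₀ * p ^ 2)))
  refine ⟨K * ((2 * π * Φ z₀ + max (log T₀) 0) / log 2 + 2), by positivity, ?_⟩
  intro Ψ hΨ T hT η hη x₀
  have hg := isUnitBallDensity_dilate hΦc hΦ0 hΦsupp hΦ1 hη.1 (by linarith [hη.2])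
  have hspace (t : ℝ) (ht : t ∈ Ioo 0 T) :
      |∫ y, heatSmooth t (dilate η Φ) y ^ 2 * Ψ (x₀ - y, t)| ≤
        K / (1 + ‖x₀‖ ^ p) * min (2 * π * t)⁻¹ ((η ^ 2)⁻¹ * Φ z₀) := by
    have htT₀ := ht.2.le.trans hT.2
    refine hg.abs_integral_heatSmooth_sq_mul_le hp ht.1 htT₀ (dilate_le hz₀ η)
      (ψ := fun y => Ψ (y, t)) (fun y => (hΨ y t ⟨ht.1.le, htT₀⟩).trans ?_) x₀
    gcongr
    exact le_max_left _ _
  calc _ ≤ K / (1 + ‖x₀‖ ^ p) * ((2 * π * Φ z₀ + max (log T₀) 0) / log 2 + 2) :=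
        abs_log_mul_setIntegral_le (by positivity) hΦz₀ hT hη hspace
    _ = _ := by ring

/-- If `Φ ∈ C_c(ℝ²)` is a probability density supported in the unit ball, and
`|Ψ(y,t)| ≤ C₀/(1 + ‖y‖^p)` on `ℝ² × [0,T₀]`, then there is `C = C(C₀,T₀,p,Φ)` such that
for all `T ∈ (0,T₀]`, `η ∈ (0,1/2)` and `x₀ ∈ ℝ²`:
`|(2π/log η⁻¹)∫₀^T∫ [P_tΦ_η(y)]² Ψ(x₀−y,t) dy dt| ≤ C/(1 + ‖x₀‖^p)`. -/
theorem stmt_14 (Φ : EuclideanSpace ℝ (Fin 2) → ℝ) (hΦc : Continuous Φ)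
    (hΦ0 : ∀ z, 0 ≤ Φ z) (hΦsupp : ∀ z : EuclideanSpace ℝ (Fin 2), 1 < ‖z‖ → Φ z = 0)
    (hΦ1 : (∫ z, Φ z) = 1)
    (p C₀ T₀ : ℝ) (hp : 0 < p) (hT₀ : 0 < T₀) :
    ∃ C : ℝ, 0 < C ∧ ∀ Ψ : EuclideanSpace ℝ (Fin 2) × ℝ → ℝ,
      (∀ y : EuclideanSpace ℝ (Fin 2), ∀ t ∈ Set.Icc (0:ℝ) T₀,
        |Ψ (y, t)| ≤ C₀ / (1 + ‖y‖ ^ p)) →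
      ∀ T ∈ Set.Ioc (0:ℝ) T₀, ∀ η ∈ Set.Ioo (0:ℝ) (1/2), ∀ x₀ : EuclideanSpace ℝ (Fin 2),
        |(2 * Real.pi / Real.log η⁻¹) *
            ∫ t in Set.Ioo (0:ℝ) T, ∫ y : EuclideanSpace ℝ (Fin 2),
              (∫ z, heatK t (y - z) * ((η ^ 2)⁻¹ * Φ (η⁻¹ • z))) ^ 2 * Ψ (x₀ - y, t)|
          ≤ C / (1 + ‖x₀‖ ^ p) :=
  stmt_14_general Φ hΦc hΦ0 hΦsupp hΦ1 p C₀ T₀ hp
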